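/- For any finite point set P in ℝ^d and all s, p ∈ P, the nearest-neighbor geodesic distance is at most the edge-squared distance: d_N(s,p) ≤ d₂(s,p). -/

import Mathlib

open scoped BigOperators
open MeasureTheory

noncomputable section

/-- Points of `ℝ^d`. -/
abbrev Pt (d : ℕ) : Type := EuclideanSpace ℝ (Fin d)

/-- The edge-squared metric on a point set `P ⊆ ℝ^d`: the infimum over finite chains of points
of `P` from `a` to `b` of the sum of squared Euclidean lengths of the steps. -/
noncomputable def edgeSq {d : ℕ} (P : Set (Pt d)) (a b : Pt d) : ℝ :=
  sInf {c : ℝ | ∃ (k : ℕ) (p : Fin (k + 1) → Pt d), p 0 = a ∧ p (Fin.last k) = b ∧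
    (∀ i, p i ∈ P) ∧ c = ∑ i : Fin k, ‖p i.succ - p i.castSucc‖ ^ 2}

/-- A path `γ : [0,1] → ℝ^d` is piecewise-C¹ if it is continuous on `[0,1]` and there is a
partition `0 = t₀ < t₁ < ⋯ < t_m = 1` such that `γ` is `C¹` on each subinterval. -/
def PiecewiseC1 {d : ℕ} (γ : ℝ → Pt d) : Prop :=
  ContinuousOn γ (Set.Icc 0 1) ∧
  ∃ (m : ℕ) (t : Fin (m + 1) → ℝ), StrictMono t ∧ t 0 = 0 ∧ t (Fin.last m) = 1 ∧
    ∀ i : Fin m, ContDiffOn ℝ 1 γ (Set.Icc (t i.castSucc) (t i.succ))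

/-- The nearest-neighbor length of a path: `ℓ(γ) = ∫₀¹ r_P(γ(t)) ‖γ'(t)‖ dt`, where
`r_P(z) = min_{x ∈ P} ‖x - z‖` is the distance to the nearest point of `P`. -/
noncomputable def nnLength {d : ℕ} (P : Set (Pt d)) (γ : ℝ → Pt d) : ℝ :=
  ∫ t in (0:ℝ)..1, Metric.infDist (γ t) P * ‖deriv γ t‖

/-- The nearest-neighbor geodesic distance:
`d_N(a,b) = 4 ⬝ inf { ℓ(γ) | γ piecewise-C¹ path from a to b }`. -/
noncomputable def nnGeo {d : ℕ} (P : Set (Pt d)) (a b : Pt d) : ℝ :=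
  4 * sInf {l : ℝ | ∃ γ : ℝ → Pt d, PiecewiseC1 γ ∧ γ 0 = a ∧ γ 1 = b ∧ l = nnLength P γ}

/-! The segment between two points `x, y ∈ P` has nearest-neighbor length at most
`‖y - x‖² / 4`: at time `t` it is within `min t (1 - t) * ‖y - x‖` of `x` or `y`, and
`∫₀¹ min t (1 - t) dt = 1 / 4`. Concatenating paths shows that `d_N` satisfies the triangle
inequality, so along any chain of points of `P` from `s` to `p` it is at most the sum of the
squared step lengths. -/

open Set Metric AffineMap
open scoped Pointwise

section Concat

variable {α : Type*} {γ₁ γ₂ : ℝ → α}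

def pathConcat (γ₁ γ₂ : ℝ → α) (u : ℝ) : α :=
  if u ≤ 1 / 2 then γ₁ (2 * u) else γ₂ (2 * u - 1)

theorem pathConcat_of_le {u : ℝ} (hu : u ≤ 1 / 2) : pathConcat γ₁ γ₂ u = γ₁ (2 * u) :=
  if_pos hu

theorem pathConcat_of_gt {u : ℝ} (hu : 1 / 2 < u) :
    pathConcat γ₁ γ₂ u = γ₂ (2 * u - 1) :=
  if_neg hu.not_ge

end Concat

/-- Piecewise `C¹` on `[a, b]`, with the partition built one interval at a time: unlike the
`Fin`-indexed partitions of `PiecewiseC1`, these concatenate by a simple induction. -/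
inductive PiecewiseC1On {E : Type*} [NormedAddCommGroup E] [NormedSpace ℝ E] (γ : ℝ → E) :
    ℝ → ℝ → Prop
  | refl (a : ℝ) : PiecewiseC1On γ a a
  | snoc {a b c : ℝ} : PiecewiseC1On γ a b → b < c → ContDiffOn ℝ 1 γ (Icc b c) →
      PiecewiseC1On γ a c

namespace PiecewiseC1On

variable {E : Type*} [NormedAddCommGroup E] [NormedSpace ℝ E]
  {γ γ' γ₁ γ₂ : ℝ → E} {a b c : ℝ}

theorem le (h : PiecewiseC1On γ a b) : a ≤ b := by
  induction h with
  | refl => exact le_rfl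
  | snoc _ hbc _ ih => exact ih.trans hbc.le

theorem trans (h₁ : PiecewiseC1On γ a b) (h₂ : PiecewiseC1On γ b c) : PiecewiseC1On γ a c := by
  induction h₂ with
  | refl => exact h₁
  | snoc _ hcd hγ ih => exact ih.snoc hcd hγ

theorem congr (h : PiecewiseC1On γ a b) (heq : EqOn γ γ' (Icc a b)) : PiecewiseC1On γ' a b := by
  induction h with
  | refl => exact refl _
  | snoc hab hbc hγ ih =>
    exact (ih (heq.mono (Icc_subset_Icc le_rfl hbc.le))).snoc hbc
      (hγ.congr fun u hu => (heq (Icc_subset_Icc hab.le le_rfl hu)).symm)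

theorem comp_mul_add (h : PiecewiseC1On γ a b) (hc : 0 < c) (e : ℝ) :
    PiecewiseC1On (fun u => γ (c * u + e)) ((a - e) / c) ((b - e) / c) := by
  induction h with
  | refl => exact refl _
  | @snoc b b' _ hbb' hγ ih =>
    refine ih.snoc (div_lt_div_of_pos_right (by linarith) hc) (hγ.comp (by fun_prop) ?_)
    intro u ⟨hbu, hub'⟩
    rw [div_le_iff₀ hc] at hbu
    rw [le_div_iff₀ hc] at hub'
    constructor <;> linarith

theorem continuousOn (h : PiecewiseC1On γ a b) : ContinuousOn γ (Icc a b) := by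
  induction h with
  | refl => simp
  | snoc hab hbc hγ ih =>
    rw [← Icc_union_Icc_eq_Icc hab.le hbc.le]
    exact ih.union_of_isClosed hγ.continuousOn isClosed_Icc isClosed_Icc

theorem of_partition {m : ℕ} {t : Fin (m + 1) → ℝ} (ht : StrictMono t)
    (hγ : ∀ i : Fin m, ContDiffOn ℝ 1 γ (Icc (t i.castSucc) (t i.succ))) :
    PiecewiseC1On γ (t 0) (t (Fin.last m)) := by
  induction m with
  | zero => exact refl _
  | succ m ih =>
    have hinit := ih (t := fun i => t i.castSucc) (ht.comp Fin.strictMono_castSucc)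
      (fun i => by simpa only [Fin.succ_castSucc] using hγ i.castSucc)
    exact hinit.snoc (ht (Fin.castSucc_lt_last _)) (hγ (Fin.last m))

theorem exists_partition (h : PiecewiseC1On γ a b) :
    ∃ (m : ℕ) (t : Fin (m + 1) → ℝ), StrictMono t ∧ t 0 = a ∧ t (Fin.last m) = b ∧
      ∀ i : Fin m, ContDiffOn ℝ 1 γ (Icc (t i.castSucc) (t i.succ)) := by
  induction h with
  | refl => exact ⟨0, fun _ => a, Fin.strictMono_iff_lt_succ.2 Fin.elim0, rfl, rfl, Fin.elim0⟩
  | @snoc b c _ hbc hγ ih =>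
    obtain ⟨m, t, ht, h0, hlast, hpieces⟩ := ih
    refine ⟨m + 1, Fin.snoc t c, ?_, ?_, by simp, ?_⟩
    · rw [Fin.strictMono_iff_lt_succ]
      intro i
      cases i using Fin.lastCases with
      | last => simpa [hlast] using hbc
      | cast i =>
        rw [Fin.succ_castSucc, Fin.snoc_castSucc, Fin.snoc_castSucc]
        exact ht i.castSucc_lt_succ
    · simpa using h0
    · intro i
      cases i using Fin.lastCases with
      | last => simpa [hlast] using hγ
      | cast i =>
        rw [Fin.succ_castSucc, Fin.snoc_castSucc, Fin.snoc_castSucc]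
        exact hpieces i

theorem pathConcat (h₁ : PiecewiseC1On γ₁ 0 1) (h₂ : PiecewiseC1On γ₂ 0 1)
    (hj : γ₁ 1 = γ₂ 0) : PiecewiseC1On (pathConcat γ₁ γ₂) 0 1 := by
  have h₁' : PiecewiseC1On (fun u => γ₁ (2 * u + 0)) 0 (1 / 2) := by
    convert h₁.comp_mul_add two_pos 0 using 1 <;> norm_num
  have h₂' : PiecewiseC1On (fun u => γ₂ (2 * u + -1)) (1 / 2) 1 := by
    convert h₂.comp_mul_add two_pos (-1) using 1 <;> norm_num
  refine (h₁'.congr fun u hu => ?_).trans (h₂'.congr fun u hu => ?_)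
  · rw [pathConcat_of_le hu.2, add_zero]
  · rcases hu.1.eq_or_lt with rfl | hu
    · rw [pathConcat_of_le le_rfl]
      norm_num [hj]
    · rw [pathConcat_of_gt hu, sub_eq_add_neg]

end PiecewiseC1On

section Length

variable {E : Type*} [NormedAddCommGroup E] [NormedSpace ℝ E] (P : Set E)
  {γ γ' γ₁ γ₂ : ℝ → E} {a b c : ℝ}

/-- `nnLength P γ` is `nnLengthOn P γ 0 1` by definition. -/
def nnLengthOn (γ : ℝ → E) (a b : ℝ) : ℝ :=
  ∫ t in a..b, infDist (γ t) P * ‖deriv γ t‖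

theorem nnLengthOn_nonneg (hab : a ≤ b) : 0 ≤ nnLengthOn P γ a b :=
  intervalIntegral.integral_nonneg hab fun _ _ => mul_nonneg infDist_nonneg (norm_nonneg _)

theorem nnLengthOn_le_add (hab : a ≤ b) (hbc : b ≤ c) :
    nnLengthOn P γ a c ≤ nnLengthOn P γ a b + nnLengthOn P γ b c := by
  by_cases hint : IntervalIntegrable (fun t => infDist (γ t) P * ‖deriv γ t‖) volume a c
  · have hb : b ∈ uIcc a c := mem_uIcc_of_le hab hbc
    exact (intervalIntegral.integral_add_adjacent_intervals
      (hint.mono_set (uIcc_subset_uIcc left_mem_uIcc hb))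
      (hint.mono_set (uIcc_subset_uIcc hb right_mem_uIcc))).ge
  · rw [nnLengthOn, intervalIntegral.integral_undef hint]
    exact add_nonneg (nnLengthOn_nonneg P hab) (nnLengthOn_nonneg P hbc)

theorem nnLengthOn_congr (hab : a ≤ b) (h : EqOn γ γ' (Ioo a b)) :
    nnLengthOn P γ a b = nnLengthOn P γ' a b := by
  simp only [nnLengthOn, intervalIntegral.integral_of_le hab, integral_Ioc_eq_integral_Ioo]
  refine setIntegral_congr_fun measurableSet_Ioo fun u hu => ?_
  rw [h hu, (Filter.eventuallyEq_of_mem (isOpen_Ioo.mem_nhds hu) h).deriv_eq]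

theorem nnLengthOn_comp_mul_add (hc : 0 < c) (e : ℝ) :
    nnLengthOn P (fun u => γ (c * u + e)) a b = nnLengthOn P γ (c * a + e) (c * b + e) := by
  have hderiv (u : ℝ) : deriv (fun u => γ (c * u + e)) u = c • deriv γ (c * u + e) := by
    rw [deriv_comp_mul_left c (fun v => γ (v + e)) u, deriv_comp_add_const]
  simp only [nnLengthOn, hderiv, norm_smul, Real.norm_of_nonneg hc.le, mul_left_comm _ c,
    intervalIntegral.integral_const_mul]
  exact intervalIntegral.smul_integral_comp_mul_add
    (fun t => infDist (γ t) P * ‖deriv γ t‖) c e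

theorem nnLengthOn_pathConcat_le :
    nnLengthOn P (pathConcat γ₁ γ₂) 0 1 ≤ nnLengthOn P γ₁ 0 1 + nnLengthOn P γ₂ 0 1 := by
  have h₁ : nnLengthOn P (pathConcat γ₁ γ₂) 0 (1 / 2) = nnLengthOn P γ₁ 0 1 := by
    rw [nnLengthOn_congr P (γ' := fun u => γ₁ (2 * u + 0)) (by norm_num)
      fun u hu => by simp only [pathConcat_of_le hu.2.le, add_zero],
      nnLengthOn_comp_mul_add P two_pos]
    norm_num
  have h₂ : nnLengthOn P (pathConcat γ₁ γ₂) (1 / 2) 1 = nnLengthOn P γ₂ 0 1 := by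
    rw [nnLengthOn_congr P (γ' := fun u => γ₂ (2 * u + -1)) (by norm_num)
      fun u hu => by simp only [pathConcat_of_gt hu.1, sub_eq_add_neg],
      nnLengthOn_comp_mul_add P two_pos]
    norm_num
  rw [← h₁, ← h₂]
  exact nnLengthOn_le_add P (by norm_num) (by norm_num)

theorem integral_min_self_one_sub : ∫ x in (0 : ℝ)..1, min x (1 - x) = 1 / 4 := by
  have hi : Continuous fun x : ℝ => min x (1 - x) := by fun_prop
  have h₁ : ∫ x in (0 : ℝ)..1 / 2, min x (1 - x) = ∫ x in (0 : ℝ)..1 / 2, x :=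
    intervalIntegral.integral_congr fun x hx => by
      rw [uIcc_of_le (by norm_num)] at hx
      exact min_eq_left (by linarith [hx.2])
  have h₂ : ∫ x in (1 / 2 : ℝ)..1, min x (1 - x) = ∫ x in (1 / 2 : ℝ)..1, (1 - x) :=
    intervalIntegral.integral_congr fun x hx => by
      rw [uIcc_of_le (by norm_num)] at hx
      exact min_eq_right (by linarith [hx.1])
  rw [← intervalIntegral.integral_add_adjacent_intervals (b := 1 / 2)
    (hi.intervalIntegrable _ _) (hi.intervalIntegrable _ _), h₁, h₂,
    intervalIntegral.integral_sub intervalIntegrable_const intervalIntegral.intervalIntegrable_id]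
  norm_num

theorem nnLengthOn_lineMap_le {x y : E} (hx : x ∈ P) (hy : y ∈ P) :
    nnLengthOn P (lineMap x y) 0 1 ≤ dist x y ^ 2 / 4 := by
  have hbound : ∀ t ∈ Icc (0 : ℝ) 1,
      infDist (lineMap x y t) P * ‖deriv (lineMap x y) t‖ ≤ min t (1 - t) * dist x y ^ 2 := by
    intro t ⟨ht₀, ht₁⟩
    have hnear : infDist (lineMap x y t) P ≤ min t (1 - t) * dist x y := by
      rw [min_mul_of_nonneg _ _ dist_nonneg]
      refine le_min ((infDist_le_dist_of_mem hx).trans_eq ?_)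
        ((infDist_le_dist_of_mem hy).trans_eq ?_)
      · rw [dist_lineMap_left, Real.norm_of_nonneg ht₀]
      · rw [dist_lineMap_right, Real.norm_of_nonneg (by linarith)]
    rw [hasDerivAt_lineMap.deriv, ← dist_eq_norm', sq, ← mul_assoc]
    exact mul_le_mul_of_nonneg_right hnear dist_nonneg
  calc nnLengthOn P (lineMap x y) 0 1
      ≤ ∫ t in (0 : ℝ)..1, min t (1 - t) * dist x y ^ 2 := by
        refine intervalIntegral.integral_mono_on zero_le_one ?_
          ((by fun_prop : Continuous _).intervalIntegrable _ _) hbound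
        simp only [hasDerivAt_lineMap.deriv]
        exact (by fun_prop : Continuous _).intervalIntegrable _ _
    _ = dist x y ^ 2 / 4 := by
        rw [intervalIntegral.integral_mul_const, integral_min_self_one_sub]
        ring

end Length

section NNGeo

variable {d : ℕ} (P : Set (Pt d))

theorem piecewiseC1_iff {γ : ℝ → Pt d} : PiecewiseC1 γ ↔ PiecewiseC1On γ 0 1 :=
  ⟨fun ⟨_, _, _, ht, h0, h1, hγ⟩ => h0 ▸ h1 ▸ PiecewiseC1On.of_partition ht hγ,
    fun h => ⟨h.continuousOn, h.exists_partition⟩⟩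

def nnPathLengths (a b : Pt d) : Set ℝ :=
  {l | ∃ γ : ℝ → Pt d, PiecewiseC1 γ ∧ γ 0 = a ∧ γ 1 = b ∧ l = nnLength P γ}

theorem nnGeo_eq (a b : Pt d) : nnGeo P a b = 4 * sInf (nnPathLengths P a b) := rfl

theorem lineMap_mem_nnPathLengths (a b : Pt d) :
    nnLength P (lineMap a b) ∈ nnPathLengths P a b :=
  ⟨_, piecewiseC1_iff.2 ((PiecewiseC1On.refl 0).snoc one_pos (by fun_prop)),
    lineMap_apply_zero a b, lineMap_apply_one a b, rfl⟩

theorem bddBelow_nnPathLengths (a b : Pt d) : BddBelow (nnPathLengths P a b) :=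
  ⟨0, by rintro _ ⟨γ, -, -, -, rfl⟩; exact nnLengthOn_nonneg P zero_le_one⟩

theorem nnGeo_le_dist_sq {a b : Pt d} (ha : a ∈ P) (hb : b ∈ P) :
    nnGeo P a b ≤ dist a b ^ 2 := by
  have hseg := (csInf_le (bddBelow_nnPathLengths P a b) (lineMap_mem_nnPathLengths P a b)).trans
    (nnLengthOn_lineMap_le P ha hb)
  rw [nnGeo_eq]
  linarith

theorem nnGeo_triangle (a b c : Pt d) : nnGeo P a c ≤ nnGeo P a b + nnGeo P b c := by
  have hne (x y : Pt d) : (nnPathLengths P x y).Nonempty := ⟨_, lineMap_mem_nnPathLengths P x y⟩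
  have hconcat : ∀ l ∈ nnPathLengths P a b + nnPathLengths P b c,
      sInf (nnPathLengths P a c) ≤ l := by
    rintro _ ⟨_, ⟨γ₁, hγ₁, h₁0, h₁1, rfl⟩, _, ⟨γ₂, hγ₂, h₂0, h₂1, rfl⟩, rfl⟩
    have hj : γ₁ 1 = γ₂ 0 := h₁1.trans h₂0.symm
    have hγ : PiecewiseC1 (pathConcat γ₁ γ₂) := piecewiseC1_iff.2
      ((piecewiseC1_iff.1 hγ₁).pathConcat (piecewiseC1_iff.1 hγ₂) hj)
    refine (csInf_le (bddBelow_nnPathLengths P a c) ⟨_, hγ, ?_, ?_, rfl⟩).trans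
      (nnLengthOn_pathConcat_le P)
    · rw [pathConcat_of_le (by norm_num), mul_zero, h₁0]
    · rw [pathConcat_of_gt (by norm_num)]
      norm_num [h₂1]
  have hsum := le_csInf ((hne a b).add (hne b c)) hconcat
  rw [csInf_add (hne a b) (bddBelow_nnPathLengths P a b) (hne b c)
    (bddBelow_nnPathLengths P b c)] at hsum
  simp only [nnGeo_eq]
  linarith

theorem nnGeo_le_sum_sq {k : ℕ} {q : Fin (k + 1) → Pt d} (hq : ∀ i, q i ∈ P) :
    nnGeo P (q 0) (q (Fin.last k)) ≤ ∑ i : Fin k, ‖q i.succ - q i.castSucc‖ ^ 2 := by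
  induction k with
  | zero => simpa using nnGeo_le_dist_sq P (hq 0) (hq 0)
  | succ k ih =>
    calc nnGeo P (q 0) (q (Fin.last (k + 1)))
        ≤ nnGeo P (q 0) (q (Fin.last k).castSucc)
          + nnGeo P (q (Fin.last k).castSucc) (q (Fin.last (k + 1))) := nnGeo_triangle P _ _ _
      _ ≤ ∑ i : Fin k, ‖q i.castSucc.succ - q i.castSucc.castSucc‖ ^ 2
          + ‖q (Fin.last k).succ - q (Fin.last k).castSucc‖ ^ 2 := by
        gcongr
        · exact ih fun i => hq i.castSucc
        · rw [← dist_eq_norm']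
          exact nnGeo_le_dist_sq P (hq _) (hq _)
      _ = ∑ i : Fin (k + 1), ‖q i.succ - q i.castSucc‖ ^ 2 :=
          (Fin.sum_univ_castSucc fun i : Fin (k + 1) => ‖q i.succ - q i.castSucc‖ ^ 2).symm

end NNGeo

theorem nnGeo_le_edgeSq (d : ℕ) (P : Set (Pt d))
    (s p : Pt d) (hs : s ∈ P) (hp : p ∈ P) :
    nnGeo P s p ≤ edgeSq P s p := by
  refine le_csInf ⟨_, 1, ![s, p], rfl, rfl, ?_, rfl⟩ ?_
  · intro i
    fin_cases i
    exacts [hs, hp]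
  · rintro _ ⟨k, q, rfl, rfl, hq, rfl⟩
    exact nnGeo_le_sum_sq P hq
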